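/- arXiv:2303.10589 — 2 statements merged into one kernel-verified Lean document; each statement's English description precedes it below -/
import Mathlib

section
/- Let H be a real Hilbert space, T : D(T) ⊆ H → K a densely defined closed operator between Hilbert spaces, f ∈ K, and C > 0 a constant such that |⟨f, v⟩_K|² ≤ C · ‖T* v‖²_H for all v ∈ D(T*). Then there exists u ∈ H with T u = f and ‖u‖²_H ≤ C. -/
/-!
The a priori estimate makes `T* v ↦ ⟪f, v⟫` a well-defined functional on the range of `T*`
of norm at most `√C`. Extending it by Hahn–Banach and representing it by Riesz gives `u` with
`‖u‖ ≤ √C` and `⟪u, T* v⟫ = ⟪f, v⟫` for all `v ∈ D(T*)`, i.e. `(u, f)` lies in the graph of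
`T**`. As the graph of `T` is closed, it is its own double orthogonal complement, so `T** ≤ T`
and `T u = f`.
-/

open scoped RealInnerProductSpace

theorem LinearMap.exists_strongDual_range_comp_eq {𝕜 V E : Type*} [NontriviallyNormedField 𝕜]
    [AddCommGroup V] [Module 𝕜 V] [SeminormedAddCommGroup E] [NormedSpace 𝕜 E]
    (A : V →ₗ[𝕜] E) (ψ : V →ₗ[𝕜] 𝕜) {M : ℝ} (hM : 0 ≤ M) (h : ∀ v, ‖ψ v‖ ≤ M * ‖A v‖) :
    ∃ φ : StrongDual 𝕜 (LinearMap.range A), ‖φ‖ ≤ M ∧ ∀ v, φ (A.rangeRestrict v) = ψ v := by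
  have hker : LinearMap.ker A ≤ LinearMap.ker ψ := fun v hv ↦ by
    simpa [LinearMap.mem_ker.1 hv] using h v
  set φ₀ : LinearMap.range A →ₗ[𝕜] 𝕜 :=
    (LinearMap.ker A).liftQ ψ hker ∘ₗ A.quotKerEquivRange.symm.toLinearMap
  have hφ₀ : ∀ v, φ₀ (A.rangeRestrict v) = ψ v := fun v ↦ by
    simp [φ₀, LinearMap.rangeRestrict, LinearMap.codRestrict,
      LinearMap.quotKerEquivRange_symm_apply_image]
  have hbound : ∀ w, ‖φ₀ w‖ ≤ M * ‖w‖ := by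
    intro w
    obtain ⟨v, rfl⟩ := A.surjective_rangeRestrict w
    rw [hφ₀]
    exact h v
  exact ⟨φ₀.mkContinuous M hbound, φ₀.mkContinuous_norm_le hM hbound, hφ₀⟩

section

variable {𝕜 E F : Type*} [RCLike 𝕜]
  [NormedAddCommGroup E] [InnerProductSpace 𝕜 E] [CompleteSpace E]
  [NormedAddCommGroup F] [InnerProductSpace 𝕜 F] [CompleteSpace F]

theorem exists_inner_eq_of_norm_le_mul_norm {V : Type*} [AddCommGroup V] [Module 𝕜 V]
    (A : V →ₗ[𝕜] E) (ψ : V →ₗ[𝕜] 𝕜) {M : ℝ} (hM : 0 ≤ M) (h : ∀ v, ‖ψ v‖ ≤ M * ‖A v‖) :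
    ∃ u : E, ‖u‖ ≤ M ∧ ∀ v, inner 𝕜 u (A v) = ψ v := by
  obtain ⟨φ, hφ, hφA⟩ := A.exists_strongDual_range_comp_eq ψ hM h
  obtain ⟨g, hgφ, hg⟩ := exists_extension_norm_eq _ φ
  refine ⟨(InnerProductSpace.toDual 𝕜 E).symm g, ?_, fun v ↦ ?_⟩
  · rwa [LinearIsometryEquiv.norm_map, hg]
  · rw [InnerProductSpace.toDual_symm_apply, ← hφA]
    exact hgφ (A.rangeRestrict v)

open Submodule WithLp in
theorem Submodule.adjoint_adjoint_le {g : Submodule 𝕜 (E × F)} (hg : IsClosed (g : Set (E × F))) :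
    g.adjoint.adjoint ≤ g := by
  intro x hx
  rw [mem_adjoint_iff] at hx
  set G : Submodule 𝕜 (WithLp 2 (E × F)) := g.comap (WithLp.linearEquiv 2 𝕜 (E × F)).toLinearMap
  have hG : IsClosed (G : Set (WithLp 2 (E × F))) := hg.preimage (prod_continuous_ofLp 2 E F)
  have hxG : toLp 2 x ∈ Gᗮᗮ := by
    refine (mem_orthogonal _ _).2 fun w hw ↦ ?_
    have hw' : (w.ofLp.2, -w.ofLp.1) ∈ g.adjoint := by
      refine (mem_adjoint_iff _ _).2 fun c d hcd ↦ ?_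
      have := (mem_orthogonal _ _).1 hw (toLp 2 (c, d)) hcd
      rw [prod_inner_apply, ofLp_toLp] at this
      rw [inner_neg_right]
      linear_combination this
    have := hx _ _ hw'
    rw [inner_neg_left] at this
    rw [prod_inner_apply, ofLp_toLp]
    linear_combination -this
  rwa [orthogonal_orthogonal_eq_closure, hG.submodule_topologicalClosure_eq] at hxG

theorem LinearPMap.mem_graph_of_inner_adjoint {T : E →ₗ.[𝕜] F} (hT : Dense (T.domain : Set E))
    (hclosed : T.IsClosed) {u : E} {f : F}
    (h : ∀ v : T.adjoint.domain, inner 𝕜 (T.adjoint v) u = inner 𝕜 (v : F) f) :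
    (u, f) ∈ T.graph := by
  apply Submodule.adjoint_adjoint_le hclosed
  rw [← LinearPMap.adjoint_graph_eq_graph_adjoint hT, Submodule.mem_adjoint_iff]
  intro a b hab
  obtain ⟨v, rfl, rfl⟩ := T.adjoint.mem_graph_iff.1 hab
  rw [h v, sub_self]

end

/-- If `T` is a densely defined closed operator between real Hilbert spaces,
`f ∈ K`, and `⟨f, v⟩² ≤ C‖T*v‖²` for all `v` in the domain of the adjoint, then there is
`u` in the domain of `T` with `T u = f` and `‖u‖² ≤ C`. -/
theorem stmt2 (H K : Type*)
    [NormedAddCommGroup H] [InnerProductSpace ℝ H] [CompleteSpace H]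
    [NormedAddCommGroup K] [InnerProductSpace ℝ K] [CompleteSpace K]
    (T : H →ₗ.[ℝ] K) (hdense : Dense (T.domain : Set H)) (hclosed : T.IsClosed)
    (f : K) (C : ℝ) (hC : 0 < C)
    (hbound : ∀ v : T.adjoint.domain, ⟪f, (v : K)⟫ ^ 2 ≤ C * ‖T.adjoint v‖ ^ 2) :
    ∃ u : T.domain, T u = f ∧ ‖(u : H)‖ ^ 2 ≤ C := by
  have hsqrt : ∀ v : T.adjoint.domain, ‖⟪f, (v : K)⟫‖ ≤ √C * ‖T.adjoint v‖ := fun v ↦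
    abs_le_of_sq_le_sq (by rw [mul_pow, Real.sq_sqrt hC.le]; exact hbound v) (by positivity)
  obtain ⟨u, hu, hinner⟩ := exists_inner_eq_of_norm_le_mul_norm T.adjoint.toFun
    ((innerₛₗ ℝ f) ∘ₗ T.adjoint.domain.subtype) (Real.sqrt_nonneg C) hsqrt
  have hgraph : (u, f) ∈ T.graph := T.mem_graph_of_inner_adjoint hdense hclosed fun v ↦ by
    rw [real_inner_comm, ← LinearPMap.toFun_eq_coe, hinner v, real_inner_comm]
    rfl
  obtain ⟨x, hxu, hxf⟩ := T.mem_graph_iff.1 hgraph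
  refine ⟨x, hxf, ?_⟩
  calc ‖(x : H)‖ ^ 2 ≤ √C ^ 2 := by rw [hxu]; gcongr
    _ = C := Real.sq_sqrt hC.le
end

section
/- Key localization step: let D ⊆ ℝ^n be open, B_a ⊂ D a ball centered at p, and suppose Q : D → End(Λ^q(ℝ^n)* ⊗ ℝ^r) is continuous with ⟨Q(x)ξ, ξ⟩ < −c < 0 for a fixed nonzero constant-coefficient form ξ and all x ∈ B_a. Let α ∈ Λ^q_c(D, E) be smooth with compact support in B_a, equal to ξ on B_{a/2}, and let ψ_s(x) = s(|x−p|² − a²/4). Then ∫_D |∇α|² e^{−ψ_s} dλ + ∫_D ⟨Q α, α⟩ e^{−ψ_s} dλ → −∞ as s → +∞; in particular this sum is negative for s large enough. -/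
open MeasureTheory Finset Filter

noncomputable section

abbrev Pt (n : ℕ) := EuclideanSpace ℝ (Fin n)

/-- The fiber of `E`-valued `q`-form coefficients. -/
abbrev W (n r q : ℕ) := (Fin q → Fin n) → Fin r → ℝ

/-- Euclidean inner product on the coefficient fiber. -/
def wInner {n r q : ℕ} (v w : W n r q) : ℝ :=
  ∑ I : Fin q → Fin n, ∑ τ : Fin r, v I τ * w I τ

/-- Partial derivative `∂f/∂x_j` at `x`. -/
def pd {n : ℕ} (j : Fin n) (f : Pt n → ℝ) (x : Pt n) : ℝ :=
  fderiv ℝ f x (EuclideanSpace.single j 1)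

/-- Squared Euclidean norm of all first derivatives of the coefficients of `α`. -/
def gradSq {n r q : ℕ} (α : Pt n → W n r q) (x : Pt n) : ℝ :=
  ∑ j : Fin n, ∑ I : Fin q → Fin n, ∑ τ : Fin r, (pd j (fun y => α y I τ) x) ^ 2

/-- Key localization step.  If `Q` is a continuous field of endomorphisms
of the coefficient space with `⟨Q(x)ξ, ξ⟩ < −c < 0` on the ball `B_a ⊆ D` for a fixed
nonzero constant form `ξ`, and `α` is smooth with compact support in `B_a` and equal to
`ξ` on `B_{a/2}`, then with `ψ_s(x) = s(‖x−p‖² − a²/4)` the quantity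
`∫_D |∇α|² e^{−ψ_s} + ∫_D ⟨Qα, α⟩ e^{−ψ_s}` tends to `−∞` as `s → ∞`; in particular it
is negative for all large `s`. -/
theorem stmt10 (n r q : ℕ) (D : Set (Pt n)) (hD : IsOpen D)
    (p : Pt n) (a : ℝ) (ha : 0 < a) (hball : Metric.ball p a ⊆ D)
    (Q : Pt n → (W n r q →ₗ[ℝ] W n r q)) (hQc : ∀ w, Continuous fun x => Q x w)
    (ξ : W n r q) (hξ : ξ ≠ 0) (c : ℝ) (hc : 0 < c)
    (hneg : ∀ x ∈ Metric.ball p a, wInner (Q x ξ) ξ < -c)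
    (α : Pt n → W n r q)
    (hαs : ∀ I τ, ContDiff ℝ (⊤ : ℕ∞) fun x => α x I τ)
    (hαsupp : ∀ I τ, HasCompactSupport (fun x => α x I τ) ∧
      tsupport (fun x => α x I τ) ⊆ Metric.ball p a)
    (hαξ : ∀ x ∈ Metric.ball p (a / 2), α x = ξ) :
    Tendsto (fun s : ℝ =>
        (∫ x in D, gradSq α x * Real.exp (-(s * (‖x - p‖ ^ 2 - a ^ 2 / 4)))) +
          ∫ x in D, wInner (Q x (α x)) (α x) *
            Real.exp (-(s * (‖x - p‖ ^ 2 - a ^ 2 / 4))))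
      atTop atBot ∧
    ∃ s₀ : ℝ, ∀ s ≥ s₀,
      (∫ x in D, gradSq α x * Real.exp (-(s * (‖x - p‖ ^ 2 - a ^ 2 / 4)))) +
        (∫ x in D, wInner (Q x (α x)) (α x) *
          Real.exp (-(s * (‖x - p‖ ^ 2 - a ^ 2 / 4)))) < 0 := by
  classical
  -- the weight function
  set ψe : ℝ → Pt n → ℝ := fun s x => Real.exp (-(s * (‖x - p‖ ^ 2 - a ^ 2 / 4))) with hψe
  have hec : ∀ s, Continuous (ψe s) := by
    intro s
    apply Real.continuous_exp.comp
    exact (continuous_const.mul (((continuous_id.sub continuous_const).norm.pow 2).sub continuous_const)).neg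
  -- continuity facts
  have hαc : Continuous α := continuous_pi fun I => continuous_pi fun τ => (hαs I τ).continuous
  have hgc : Continuous (gradSq α) := by
    unfold gradSq pd
    refine continuous_finset_sum _ fun j _ => continuous_finset_sum _ fun I _ =>
      continuous_finset_sum _ fun τ _ => ?_
    have hf : Continuous fun x => fderiv ℝ (fun y => α y I τ) x :=
      (hαs I τ).continuous_fderiv (by simp)
    exact (hf.clm_apply continuous_const).pow 2
  have hQα : Continuous fun x => Q x (α x) := by
    let b : Module.Basis ((_ : Fin q → Fin n) × Fin r) ℝ (W n r q) :=
      Pi.basis fun _ => Pi.basisFun ℝ (Fin r)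
    have hx : ∀ x, Q x (α x) = ∑ i, b.repr (α x) i • Q x (b i) := by
      intro x
      conv_lhs => rw [← b.sum_repr (α x)]
      rw [map_sum]
      simp only [_root_.map_smul]
    rw [show (fun x => Q x (α x)) = fun x => ∑ i, b.repr (α x) i • Q x (b i) from funext hx]
    refine continuous_finset_sum _ fun i _ => Continuous.smul (f := fun x => b.repr (α x) i) ?_ (hQc (b i))
    have hco : Continuous (b.coord i) := LinearMap.continuous_of_finiteDimensional _
    simpa [Function.comp_def, Module.Basis.coord_apply] using hco.comp hαc
  have hhc : Continuous fun x => wInner (Q x (α x)) (α x) := by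
    unfold wInner
    refine continuous_finset_sum _ fun I _ => continuous_finset_sum _ fun τ _ =>
      Continuous.mul ?_ (hαs I τ).continuous
    exact (continuous_apply τ).comp ((continuous_apply I).comp hQα)
  -- the compact support set
  set K : Set (Pt n) := ⋃ I : Fin q → Fin n, ⋃ τ : Fin r, tsupport fun x => α x I τ with hK
  have hKc : IsCompact K := isCompact_iUnion fun I => isCompact_iUnion fun τ => (hαsupp I τ).1
  have hmemK : ∀ x, x ∉ K → ∀ I τ, x ∉ tsupport fun y => α y I τ := by
    intro x hx I τ h
    exact hx (Set.mem_iUnion.2 ⟨I, Set.mem_iUnion.2 ⟨τ, h⟩⟩)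
  have hα0 : ∀ x ∉ K, α x = 0 := by
    intro x hx
    funext I τ
    exact image_eq_zero_of_notMem_tsupport (f := fun y => α y I τ) (hmemK x hx I τ)
  have hg0 : ∀ x ∉ K, gradSq α x = 0 := by
    intro x hx
    unfold gradSq pd
    refine Finset.sum_eq_zero fun j _ => Finset.sum_eq_zero fun I _ =>
      Finset.sum_eq_zero fun τ _ => ?_
    have hd : fderiv ℝ (fun y => α y I τ) x = 0 := by
      by_contra hne
      exact hmemK x hx I τ (support_fderiv_subset ℝ (Function.mem_support.2 hne))
    simp [hd]
  have hh0 : ∀ x ∉ K, wInner (Q x (α x)) (α x) = 0 := by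
    intro x hx
    rw [hα0 x hx]
    simp [wInner]
  set φ : Pt n → ℝ := fun x => gradSq α x + wInner (Q x (α x)) (α x) with hφ
  have hφc : Continuous φ := hgc.add hhc
  have hφ0 : ∀ x ∉ K, φ x = 0 := by
    intro x hx
    simp only [hφ, hg0 x hx, hh0 x hx, add_zero]
  have hφsupp : HasCompactSupport φ := HasCompactSupport.intro hKc hφ0
  have hgsupp : HasCompactSupport (gradSq α) := HasCompactSupport.intro hKc hg0
  have hhsupp : HasCompactSupport (fun x => wInner (Q x (α x)) (α x)) :=
    HasCompactSupport.intro hKc hh0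
  -- integrability
  have hgint : ∀ s, Integrable fun x => gradSq α x * ψe s x := fun s =>
    (hgc.mul (hec s)).integrable_of_hasCompactSupport (hgsupp.mul_right)
  have hhint : ∀ s, Integrable fun x => wInner (Q x (α x)) (α x) * ψe s x := fun s =>
    (hhc.mul (hec s)).integrable_of_hasCompactSupport (hhsupp.mul_right)
  have hint : ∀ s, Integrable fun x => φ x * ψe s x := fun s =>
    (hφc.mul (hec s)).integrable_of_hasCompactSupport (hφsupp.mul_right)
  have habsint : Integrable fun x => |φ x| :=
    hφc.abs.integrable_of_hasCompactSupport
      (HasCompactSupport.intro hKc fun x hx => by rw [hφ0 x hx]; exact abs_zero)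
  have hsum : ∀ s : ℝ, (∫ x in D, gradSq α x * ψe s x)
      + (∫ x in D, wInner (Q x (α x)) (α x) * ψe s x) = ∫ x in D, φ x * ψe s x := by
    intro s
    rw [← integral_add ((hgint s).integrableOn) ((hhint s).integrableOn)]
    congr 1
    funext x
    simp only [hφ, add_mul]
  -- constants
  have ha2 : Metric.ball p (a / 2) ⊆ D := fun x hx =>
    hball (Metric.ball_subset_ball (by linarith) hx)
  set V : ℝ := (volume (Metric.ball p (a / 4))).toReal with hV
  have hVpos : 0 < V := by
    rw [hV]
    exact ENNReal.toReal_pos (Metric.measure_ball_pos _ _ (by linarith)).ne' measure_ball_lt_top.ne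
  set κ : ℝ := a ^ 2 / 4 - (a / 4) ^ 2 with hκ
  have hκpos : 0 < κ := by rw [hκ]; nlinarith
  set C : ℝ := ∫ x in D \ Metric.ball p (a / 2), |φ x| with hC
  -- the key estimate
  have key : ∀ s : ℝ, 0 ≤ s →
      (∫ x in D, φ x * ψe s x) ≤ C - c * (V * Real.exp (s * κ)) := by
    intro s hs
    have hmD : MeasurableSet D := hD.measurableSet
    have hsplit : (∫ x in D, φ x * ψe s x)
        = (∫ x in Metric.ball p (a / 2), φ x * ψe s x)
          + ∫ x in D \ Metric.ball p (a / 2), φ x * ψe s x := by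
      conv_lhs => rw [show D = Metric.ball p (a / 2) ∪ (D \ Metric.ball p (a / 2)) from
        (Set.union_diff_cancel ha2).symm]
      exact setIntegral_union Set.disjoint_sdiff_right (hmD.diff measurableSet_ball)
        ((hint s).integrableOn) ((hint s).integrableOn)
    have hB1 : (∫ x in D \ Metric.ball p (a / 2), φ x * ψe s x) ≤ C := by
      rw [hC]
      apply setIntegral_mono_on ((hint s).integrableOn) habsint.integrableOn
        (hmD.diff measurableSet_ball)
      intro x hx
      have hx2 : a / 2 ≤ ‖x - p‖ := by
        have h := hx.2
        rw [Metric.mem_ball, not_lt] at h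
        rw [← dist_eq_norm x p]
        exact h
      have he1 : ψe s x ≤ 1 := by
        rw [hψe]
        simp only
        rw [Real.exp_le_one_iff]
        have hsq : a ^ 2 / 4 ≤ ‖x - p‖ ^ 2 := by nlinarith [norm_nonneg (x - p)]
        nlinarith
      calc φ x * ψe s x ≤ |φ x| * ψe s x :=
            mul_le_mul_of_nonneg_right (le_abs_self _) (Real.exp_pos _).le
        _ ≤ |φ x| * 1 := mul_le_mul_of_nonneg_left he1 (abs_nonneg _)
        _ = |φ x| := mul_one _
    have heintA : IntegrableOn (ψe s) (Metric.ball p (a / 2)) :=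
      ((hec s).continuousOn.integrableOn_compact (isCompact_closedBall p (a / 2))).mono_set
        Metric.ball_subset_closedBall
    have hB2 : (∫ x in Metric.ball p (a / 2), φ x * ψe s x)
        ≤ ∫ x in Metric.ball p (a / 2), -c * ψe s x := by
      apply setIntegral_mono_on ((hint s).integrableOn) (heintA.const_mul _) measurableSet_ball
      intro x hx
      have hg0' : gradSq α x = 0 := by
        unfold gradSq pd
        refine Finset.sum_eq_zero fun j _ => Finset.sum_eq_zero fun I _ =>
          Finset.sum_eq_zero fun τ _ => ?_
        have hd : fderiv ℝ (fun y => α y I τ) x = fderiv ℝ (fun _ => ξ I τ) x := by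
          apply Filter.EventuallyEq.fderiv_eq
          filter_upwards [Metric.isOpen_ball.mem_nhds hx] with y hy
          rw [hαξ y hy]
        rw [hd, fderiv_fun_const]
        simp
      have hφle : φ x ≤ -c := by
        have hn := hneg x (Metric.ball_subset_ball (by linarith) hx)
        simp only [hφ, hg0', hαξ x hx, zero_add]
        linarith
      exact mul_le_mul_of_nonneg_right hφle (Real.exp_pos _).le
    have hB3 : (∫ x in Metric.ball p (a / 2), -c * ψe s x)
        = -c * ∫ x in Metric.ball p (a / 2), ψe s x := integral_const_mul _ _
    have hmono : V * Real.exp (s * κ) ≤ ∫ x in Metric.ball p (a / 2), ψe s x := by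
      have hsub : Metric.ball p (a / 4) ⊆ Metric.ball p (a / 2) :=
        Metric.ball_subset_ball (by linarith)
      have h1 : (∫ x in Metric.ball p (a / 4), ψe s x)
          ≤ ∫ x in Metric.ball p (a / 2), ψe s x :=
        setIntegral_mono_set heintA
          (Filter.Eventually.of_forall fun x => (Real.exp_pos _).le)
          (HasSubset.Subset.eventuallyLE hsub)
      have h2 : V * Real.exp (s * κ) ≤ ∫ x in Metric.ball p (a / 4), ψe s x := by
        have hconst : (∫ _x in Metric.ball p (a / 4), Real.exp (s * κ))
            = V * Real.exp (s * κ) := by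
          rw [setIntegral_const, smul_eq_mul, hV]; rfl
        rw [← hconst]
        apply setIntegral_mono_on (integrableOn_const measure_ball_lt_top.ne)
          (heintA.mono_set hsub) measurableSet_ball
        intro x hx
        rw [hψe]
        simp only
        rw [Real.exp_le_exp]
        have hd : ‖x - p‖ ≤ a / 4 := by
          rw [Metric.mem_ball, dist_eq_norm] at hx
          exact hx.le
        have hsq : ‖x - p‖ ^ 2 ≤ (a / 4) ^ 2 := by nlinarith [norm_nonneg (x - p)]
        rw [hκ]
        nlinarith
      linarith
    have hfin : -c * ∫ x in Metric.ball p (a / 2), ψe s x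
        ≤ -c * (V * Real.exp (s * κ)) :=
      mul_le_mul_of_nonpos_left hmono (by linarith)
    calc (∫ x in D, φ x * ψe s x)
        = (∫ x in Metric.ball p (a / 2), φ x * ψe s x)
          + ∫ x in D \ Metric.ball p (a / 2), φ x * ψe s x := hsplit
      _ ≤ -c * (V * Real.exp (s * κ)) + C := by
          have := hB2.trans (le_of_eq hB3)
          linarith [this.trans hfin, hB1]
      _ = C - c * (V * Real.exp (s * κ)) := by ring
  -- the bounding function tends to -∞
  have hbound : Tendsto (fun s : ℝ => C - c * (V * Real.exp (s * κ))) atTop atBot := by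
    have h1 : Tendsto (fun s : ℝ => s * κ) atTop atTop := tendsto_id.atTop_mul_const hκpos
    have h2 : Tendsto (fun s : ℝ => Real.exp (s * κ)) atTop atTop :=
      Real.tendsto_exp_atTop.comp h1
    have h3 : Tendsto (fun s : ℝ => c * (V * Real.exp (s * κ))) atTop atTop :=
      (h2.const_mul_atTop hVpos).const_mul_atTop hc
    have h4 : Tendsto (fun s : ℝ => -(c * (V * Real.exp (s * κ)))) atTop atBot :=
      tendsto_neg_atTop_atBot.comp h3
    simpa [sub_eq_add_neg] using tendsto_atBot_add_const_left atTop C h4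
  have hmain : Tendsto (fun s : ℝ =>
      (∫ x in D, gradSq α x * ψe s x)
        + ∫ x in D, wInner (Q x (α x)) (α x) * ψe s x) atTop atBot := by
    apply tendsto_atBot_mono' atTop ?_ hbound
    filter_upwards [eventually_ge_atTop (0 : ℝ)] with s hs
    rw [hsum s]
    exact key s hs
  refine ⟨hmain, ?_⟩
  have hev := hmain.eventually (eventually_lt_atBot (0 : ℝ))
  exact eventually_atTop.1 hev
end
end
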